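/- arXiv:2206.01254 — 4 statements merged into one kernel-verified Lean document; each statement's English description precedes it below -/
import Mathlib

section
/- Let σ > 0, let μ be the Gaussian measure on ℝ with mean 0 and variance σ², let x₀ ∈ ℝ, and let f : ℝ → ℝ be differentiable with continuous derivative such that both f and f′ have at most polynomial growth. Then w* = ∫ f′(x₀+ξ) dμ(ξ) is the unique minimizer over w ∈ ℝ of the squared-error objective L(w) = ∫ (f(x₀+ξ) − w·ξ)² dμ(ξ). (The C-LIME instance of local function approximation, with additive Gaussian perturbations and squared-error loss, converges in expectation to the SmoothGrad explanation.) -/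
/-!
Write `g = f (x₀ + ·)`. Expanding the square,
`L w = E[g²] - 2 w E[ξ g(ξ)] + w² E[ξ²]`. Stein's identity `E[ξ g(ξ)] = σ² E[g'(ξ)]` comes from
integrating `(φ g)'` over `ℝ`, where the Gaussian density satisfies `φ'(ξ) = -ξ φ(ξ) / σ²`;
applied to `g` and to the identity it gives `L w = L w* + σ² (w - w*)²`. Polynomial growth of
`f` and `f'` makes every integral involved finite.
-/

open MeasureTheory ProbabilityTheory Real
open scoped NNReal

def HasPolyGrowth (g : ℝ → ℝ) : Prop :=
  ∃ (C : ℝ) (k : ℕ), ∀ x, |g x| ≤ C * (1 + |x|) ^ k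

lemma hasPolyGrowth_const (c : ℝ) : HasPolyGrowth fun _ ↦ c :=
  ⟨|c|, 0, fun _ ↦ by simp⟩

lemma hasPolyGrowth_id : HasPolyGrowth fun x ↦ x :=
  ⟨1, 1, fun x ↦ by simp⟩

namespace HasPolyGrowth

variable {f g : ℝ → ℝ}

lemma mul (hf : HasPolyGrowth f) (hg : HasPolyGrowth g) : HasPolyGrowth fun x ↦ f x * g x := by
  obtain ⟨C, k, hC⟩ := hf
  obtain ⟨D, l, hD⟩ := hg
  refine ⟨C * D, k + l, fun x ↦ ?_⟩
  calc |f x * g x| = |f x| * |g x| := abs_mul _ _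
    _ ≤ C * (1 + |x|) ^ k * (D * (1 + |x|) ^ l) :=
      mul_le_mul (hC x) (hD x) (abs_nonneg _) ((abs_nonneg _).trans (hC x))
    _ = C * D * (1 + |x|) ^ (k + l) := by ring

lemma comp_const_add (hf : HasPolyGrowth f) (a : ℝ) : HasPolyGrowth fun x ↦ f (a + x) := by
  obtain ⟨C, k, hC⟩ := hf
  have hC0 : 0 ≤ C := by simpa using (abs_nonneg _).trans (hC 0)
  refine ⟨C * (1 + |a|) ^ k, k, fun x ↦ ?_⟩
  have hshift : 1 + |a + x| ≤ (1 + |a|) * (1 + |x|) := by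
    nlinarith [abs_add_le a x, abs_nonneg a, abs_nonneg x]
  calc |f (a + x)| ≤ C * (1 + |a + x|) ^ k := hC _
    _ ≤ C * ((1 + |a|) * (1 + |x|)) ^ k := by gcongr
    _ = C * (1 + |a|) ^ k * (1 + |x|) ^ k := by rw [mul_pow, mul_assoc]

lemma integrable {μ : Measure ℝ} [IsFiniteMeasure μ] (hμ : ∀ p : ℕ, MemLp id p μ)
    (hf : HasPolyGrowth f) (hm : AEStronglyMeasurable f μ) : Integrable f μ := by
  obtain ⟨C, k, hC⟩ := hf
  have hmem : MemLp (fun x ↦ 1 + ‖x‖) k μ := (memLp_const (1 : ℝ)).add (hμ k).norm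
  refine (hmem.integrable_norm_pow'.const_mul C).mono' hm (ae_of_all _ fun x ↦ ?_)
  simpa [abs_of_nonneg (by positivity : (0 : ℝ) ≤ 1 + |x|)] using hC x

lemma integrable_gaussianReal {m : ℝ} {v : ℝ≥0} (hf : HasPolyGrowth f)
    (hm : AEStronglyMeasurable f (gaussianReal m v)) : Integrable f (gaussianReal m v) :=
  hf.integrable (fun p ↦ memLp_id_gaussianReal p) hm

end HasPolyGrowth

section Gaussian

variable {m : ℝ} {v : ℝ≥0}

lemma hasDerivAt_gaussianPDFReal (m : ℝ) (v : ℝ≥0) (x : ℝ) :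
    HasDerivAt (gaussianPDFReal m v) (-((x - m) / v) * gaussianPDFReal m v x) x := by
  rw [gaussianPDFReal_def]
  exact ((((hasDerivAt_id x).sub_const m).pow 2).neg.div_const _).exp.const_mul _
    |>.congr_deriv (by simp; ring)

lemma integrable_gaussianReal_iff {E : Type*} [NormedAddCommGroup E] [NormedSpace ℝ E]
    (hv : v ≠ 0) {g : ℝ → E} :
    Integrable g (gaussianReal m v) ↔ Integrable (fun x ↦ gaussianPDFReal m v x • g x) := by
  rw [gaussianReal_of_var_ne_zero _ hv, integrable_withDensity_iff_integrable_smul'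
    (measurable_gaussianPDF m v) (ae_of_all _ fun _ ↦ gaussianPDF_lt_top)]
  simp only [toReal_gaussianPDF]

/-- Stein's identity (Gaussian integration by parts). -/
theorem integral_sub_mul_gaussianReal (hv : v ≠ 0) {g : ℝ → ℝ} (hg : Differentiable ℝ g)
    (hgg : HasPolyGrowth g) (hgg' : HasPolyGrowth (deriv g)) :
    ∫ x, (x - m) * g x ∂gaussianReal m v = v * ∫ x, deriv g x ∂gaussianReal m v := by
  set φ := gaussianPDFReal m v
  have hint {h : ℝ → ℝ} (hh : HasPolyGrowth h) (hm : Measurable h) :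
      Integrable fun x ↦ φ x * h x := by
    simpa using (integrable_gaussianReal_iff hv).1
      (hh.integrable_gaussianReal hm.aestronglyMeasurable)
  have h₀ := hint hgg hg.continuous.measurable
  have h₁ := hint hgg' (measurable_deriv g)
  have h₂ := hint (h := fun x ↦ (x - m) * g x)
    (by simpa [neg_add_eq_sub] using (hasPolyGrowth_id.comp_const_add (-m)).mul hgg)
    ((measurable_id.sub_const m).mul hg.continuous.measurable)
  have hF (x : ℝ) : HasDerivAt (fun y ↦ φ y * g y)
      (φ x * deriv g x - (v : ℝ)⁻¹ * (φ x * ((x - m) * g x))) x :=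
    ((hasDerivAt_gaussianPDFReal m v x).mul (hg x).hasDerivAt).congr_deriv (by ring)
  have hzero := integral_eq_zero_of_hasDerivAt_of_integrable hF (h₁.sub (h₂.const_mul _)) h₀
  rw [integral_sub h₁ (h₂.const_mul _), integral_const_mul, sub_eq_zero] at hzero
  simp only [integral_gaussianReal_eq_integral_smul hv, smul_eq_mul]
  rw [hzero, mul_inv_cancel_left₀ (by exact_mod_cast hv)]

end Gaussian

lemma integral_sub_mul_sq {α : Type*} [MeasurableSpace α] {μ : Measure α} {g h : α → ℝ}
    (hg : Integrable (fun x ↦ g x ^ 2) μ) (hhg : Integrable (fun x ↦ h x * g x) μ)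
    (hh : Integrable (fun x ↦ h x ^ 2) μ) (w : ℝ) :
    ∫ x, (g x - w * h x) ^ 2 ∂μ
      = ∫ x, g x ^ 2 ∂μ - 2 * w * ∫ x, h x * g x ∂μ + w ^ 2 * ∫ x, h x ^ 2 ∂μ := by
  have hexpand : (fun x ↦ (g x - w * h x) ^ 2)
      = fun x ↦ g x ^ 2 - 2 * w * (h x * g x) + w ^ 2 * h x ^ 2 := by
    ext x; ring
  rw [hexpand, integral_add (f := fun x ↦ g x ^ 2 - 2 * w * (h x * g x))
    (hg.sub (hhg.const_mul _)) (hh.const_mul _), integral_sub hg (hhg.const_mul _), integral_const_mul, integral_const_mul]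

theorem integral_sq_sub_mul_id_gaussianReal {v : ℝ≥0} (hv : v ≠ 0) {g : ℝ → ℝ}
    (hg : Differentiable ℝ g) (hgg : HasPolyGrowth g) (hgg' : HasPolyGrowth (deriv g)) (w : ℝ) :
    ∫ x, (g x - w * x) ^ 2 ∂gaussianReal 0 v
      = ∫ x, (g x - (∫ x, deriv g x ∂gaussianReal 0 v) * x) ^ 2 ∂gaussianReal 0 v
        + v * (w - ∫ x, deriv g x ∂gaussianReal 0 v) ^ 2 := by
  set w₀ := ∫ x, deriv g x ∂gaussianReal 0 v
  have hint {h : ℝ → ℝ} (hh : HasPolyGrowth h) (hc : Continuous h) :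
      Integrable h (gaussianReal 0 v) :=
    hh.integrable_gaussianReal hc.aestronglyMeasurable
  have hcov : ∫ x, x * g x ∂gaussianReal 0 v = v * w₀ := by
    simpa using integral_sub_mul_gaussianReal (m := 0) hv hg hgg hgg'
  have hvar : ∫ x, x ^ 2 ∂gaussianReal 0 v = v := by
    simpa [sq] using integral_sub_mul_gaussianReal (m := 0) hv differentiable_id
      hasPolyGrowth_id (by simpa using hasPolyGrowth_const 1)
  have hsq := integral_sub_mul_sq (μ := gaussianReal 0 v)
    (by simpa only [sq] using hint (hgg.mul hgg) (hg.continuous.mul hg.continuous))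
    (hint (hasPolyGrowth_id.mul hgg) (continuous_id.mul hg.continuous))
    (by simpa only [sq] using hint (hasPolyGrowth_id.mul hasPolyGrowth_id) (by fun_prop))
  rw [hsq w, hsq w₀, hcov, hvar]
  ring

/-- The C-LIME instance of LFA (additive Gaussian perturbations, squared-error loss,
linear model `g(ξ) = w·ξ`) converges in expectation to the SmoothGrad explanation:
`w* = ∫ f′(x₀+ξ) dμ(ξ)` is the unique minimizer of
`L(w) = ∫ (f(x₀+ξ) − w·ξ)² dμ(ξ)` for `μ = N(0, σ²)`. -/
theorem clime_converges_to_smoothgrad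
    (σ : ℝ) (hσ : 0 < σ) (x₀ : ℝ) (f : ℝ → ℝ)
    (hf : Differentiable ℝ f)
    (hgrowth : ∃ C : ℝ, 0 < C ∧ ∃ k : ℕ, ∀ x : ℝ,
      |f x| ≤ C * (1 + |x|) ^ k ∧ |deriv f x| ≤ C * (1 + |x|) ^ k) :
    let μ : Measure ℝ := gaussianReal 0 ⟨σ ^ 2, by positivity⟩
    let wStar : ℝ := ∫ ξ, deriv f (x₀ + ξ) ∂μ
    let L : ℝ → ℝ := fun w => ∫ ξ, (f (x₀ + ξ) - w * ξ) ^ 2 ∂μ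
    (∀ w, L wStar ≤ L w) ∧ (∀ w, L w = L wStar → w = wStar) := by
  intro μ wStar L
  obtain ⟨C, -, k, hCk⟩ := hgrowth
  have hf_growth : HasPolyGrowth f := ⟨C, k, fun x ↦ (hCk x).1⟩
  have hf'_growth : HasPolyGrowth (deriv f) := ⟨C, k, fun x ↦ (hCk x).2⟩
  have hderiv : deriv (fun ξ ↦ f (x₀ + ξ)) = fun ξ ↦ deriv f (x₀ + ξ) :=
    funext fun ξ ↦ deriv_comp_const_add f x₀ ξ
  have hv : (⟨σ ^ 2, by positivity⟩ : ℝ≥0) ≠ 0 := by simp [hσ.ne']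
  have hL (w : ℝ) : L w = L wStar + σ ^ 2 * (w - wStar) ^ 2 := by
    have hparabola := integral_sq_sub_mul_id_gaussianReal hv (g := fun ξ ↦ f (x₀ + ξ))
      (fun ξ ↦ (hf _).comp ξ (differentiableAt_id.const_add x₀))
      (hf_growth.comp_const_add x₀) (hderiv ▸ hf'_growth.comp_const_add x₀) w
    rw [hderiv] at hparabola
    exact hparabola
  refine ⟨fun w ↦ ?_, fun w hw ↦ ?_⟩
  · rw [hL w]
    exact le_add_of_nonneg_right (by positivity)
  · have : σ ^ 2 * (w - wStar) ^ 2 = 0 := by linarith [hL w]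
    simpa [hσ.ne', sub_eq_zero] using this
end

section
/- Let h : ℝ → ℝ be bounded and continuous, and let x₀ ∈ ℝ. Then the expectation of h(x₀+ξ) under ξ drawn from the Gaussian measure with mean 0 and variance σ² tends to h(x₀) as σ → 0 from the right: lim_{σ→0⁺} ∫ h(x₀+ξ) dμ_{σ}(ξ) = h(x₀). In particular, applied with h = f′ for a function f with bounded continuous derivative, the SmoothGrad explanation E_{ξ∼N(0,σ²)}[f′(x₀+ξ)] converges to the Vanilla Gradients explanation f′(x₀) in the limit of small standard deviation. -/
open MeasureTheory ProbabilityTheory Filter NNReal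

/-- SmoothGrad converges to Vanilla Gradients in the limit of small standard
deviation: for bounded continuous `h`, `E_{ξ∼N(0,σ²)}[h(x₀+ξ)] → h(x₀)` as `σ → 0⁺`. -/
theorem smoothgrad_tendsto_vanilla_gradients
    (h : ℝ → ℝ) (hcont : Continuous h) (hbdd : ∃ M : ℝ, ∀ x, |h x| ≤ M) (x₀ : ℝ) :
    Tendsto (fun σ : ℝ≥0 => ∫ ξ, h (x₀ + ξ) ∂(gaussianReal 0 (σ ^ 2)))
      (nhdsWithin 0 (Set.Ioi 0)) (nhds (h x₀)) := by
  obtain ⟨M, hM⟩ := hbdd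
  have key : ∀ σ : ℝ≥0, gaussianReal 0 (σ ^ 2) = (gaussianReal 0 1).map ((σ : ℝ) * ·) := by
    intro σ
    rw [gaussianReal_map_const_mul]
    congr 1
    · simp
    · ext
      push_cast
      ring
  have heq : ∀ σ : ℝ≥0, (∫ ξ, h (x₀ + ξ) ∂(gaussianReal 0 (σ ^ 2)))
      = ∫ ξ, h (x₀ + σ * ξ) ∂(gaussianReal 0 1) := by
    intro σ
    rw [key σ, integral_map (measurable_const_mul _).aemeasurable
      (Continuous.aestronglyMeasurable (by continuity : Continuous fun ξ : ℝ => h (x₀ + ξ)))]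
  simp_rw [heq]
  have h0 : h x₀ = ∫ _, h x₀ ∂(gaussianReal 0 1) := by
    simp
  rw [show (nhds (h x₀)) = nhds (∫ _ξ, h x₀ ∂(gaussianReal 0 1)) by rw [← h0]]
  apply tendsto_integral_filter_of_dominated_convergence (fun _ => M)
  · exact Filter.Eventually.of_forall fun σ =>
      (Continuous.aestronglyMeasurable (by continuity : Continuous fun ξ : ℝ => h (x₀ + σ * ξ)))
  · exact Filter.Eventually.of_forall fun σ =>
      ae_of_all _ fun ξ => by simpa using hM (x₀ + σ * ξ)
  · exact integrable_const M
  · refine ae_of_all _ fun ξ => ?_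
    have : Tendsto (fun σ : ℝ≥0 => h (x₀ + (σ : ℝ) * ξ)) (nhds 0) (nhds (h x₀)) := by
      have hc : Continuous fun σ : ℝ≥0 => h (x₀ + (σ : ℝ) * ξ) :=
        hcont.comp (continuous_const.add (continuous_subtype_val.mul continuous_const))
      simpa using hc.tendsto 0
    exact this.mono_left nhdsWithin_le_nhds
end

section
/- Let d ≥ 1, let f : ℝ^d → ℝ be continuously differentiable, and let x₀ ∈ ℝ^d. Define the Integrated Gradients attribution A ∈ ℝ^d by A_i = x₀_i · ∫_0^1 (∇f(α·x₀))_i dα. Then A is the unique minimizer over w ∈ ℝ^d of the gradient-matching objective L(w) = ∫_0^1 ‖ (x₀ ⊙ ∇f(α·x₀)) − w ‖² dα, where (x₀ ⊙ v)_i = x₀_i · v_i denotes the componentwise product. (Local function approximation with multiplicative continuous perturbations ξ·x₀, ξ ∼ Uniform(0,1), and gradient-matching loss is equivalent to Integrated Gradients.) -/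
/-!
The integrand `α ↦ x₀ ⊙ ∇f(α • x₀)` is a square-integrable random vector `G` under the uniform
distribution on `[0, 1]`, and the IG attribution is its mean `𝔼 G`. For any `w`, the cross term of
`‖G - w‖² = ‖(G - 𝔼 G) + (𝔼 G - w)‖²` has zero mean, so `𝔼‖G - w‖² = 𝔼‖G - 𝔼 G‖² + ‖𝔼 G - w‖²`,
which is minimal exactly at `w = 𝔼 G`.
-/

open MeasureTheory Set InnerProductSpace

section MeanSquareError

variable {Ω E : Type*} [MeasurableSpace Ω] {μ : Measure Ω} [IsProbabilityMeasure μ]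
  [NormedAddCommGroup E] [InnerProductSpace ℝ E] [CompleteSpace E] {G : Ω → E}

theorem integral_norm_sub_sq_eq_add (hG : MemLp G 2 μ) (w : E) :
    ∫ x, ‖G x - w‖ ^ 2 ∂μ =
      ∫ x, ‖G x - ∫ y, G y ∂μ‖ ^ 2 ∂μ + ‖(∫ y, G y ∂μ) - w‖ ^ 2 := by
  set m := ∫ y, G y ∂μ
  have hdev : MemLp (fun x => G x - m) 2 μ := hG.sub (memLp_const m)
  have hcross : ∫ x, ⟪m - w, G x - m⟫_ℝ ∂μ = 0 := by
    rw [integral_inner (hdev.integrable one_le_two), integral_sub (hG.integrable one_le_two)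
      (integrable_const m), integral_const, probReal_univ, one_smul, sub_self, inner_zero_right]
  calc ∫ x, ‖G x - w‖ ^ 2 ∂μ
      = ∫ x, (‖G x - m‖ ^ 2 + 2 * ⟪m - w, G x - m⟫_ℝ + ‖m - w‖ ^ 2) ∂μ := by
        congr with x
        rw [← sub_add_sub_cancel (G x) m w, norm_add_sq_real, real_inner_comm]
    _ = ∫ x, ‖G x - m‖ ^ 2 ∂μ + ‖m - w‖ ^ 2 := by
        have hsq : Integrable (fun x => ‖G x - m‖ ^ 2) μ := hdev.integrable_norm_pow two_ne_zero
        have hinner : Integrable (fun x => 2 * ⟪m - w, G x - m⟫_ℝ) μ :=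
          ((hdev.integrable one_le_two).const_inner (m - w)).const_mul 2
        rw [integral_add (f := fun x => ‖G x - m‖ ^ 2 + 2 * ⟪m - w, G x - m⟫_ℝ) (hsq.add hinner)
            (integrable_const _), integral_add hsq hinner,
          integral_const_mul, hcross, integral_const, probReal_univ, one_smul, mul_zero, add_zero]

theorem integral_norm_sub_integral_sq_le (hG : MemLp G 2 μ) (w : E) :
    ∫ x, ‖G x - ∫ y, G y ∂μ‖ ^ 2 ∂μ ≤ ∫ x, ‖G x - w‖ ^ 2 ∂μ := by
  rw [integral_norm_sub_sq_eq_add hG w]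
  exact le_add_of_nonneg_right (sq_nonneg _)

theorem eq_integral_of_integral_norm_sub_sq_eq (hG : MemLp G 2 μ) {w : E}
    (hw : ∫ x, ‖G x - w‖ ^ 2 ∂μ = ∫ x, ‖G x - ∫ y, G y ∂μ‖ ^ 2 ∂μ) : w = ∫ y, G y ∂μ := by
  rw [integral_norm_sub_sq_eq_add hG w, add_eq_left, sq_eq_zero_iff, norm_eq_zero, sub_eq_zero] at hw
  exact hw.symm

end MeanSquareError

theorem ContDiff.continuous_gradient {F : Type*} [NormedAddCommGroup F] [InnerProductSpace ℝ F]
    [CompleteSpace F] {f : F → ℝ} (hf : ContDiff ℝ 1 f) : Continuous (gradient f) :=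
  (toDual ℝ F).symm.continuous.comp (hf.continuous_fderiv one_ne_zero)

theorem EuclideanSpace.integral_apply {Ω ι : Type*} [MeasurableSpace Ω] [Fintype ι] {μ : Measure Ω}
    {G : Ω → EuclideanSpace ℝ ι} (hG : Integrable G μ) (i : ι) :
    (∫ x, G x ∂μ) i = ∫ x, G x i ∂μ :=
  ((EuclideanSpace.proj i).integral_comp_comm hG).symm

theorem ContinuousOn.memLp_restrict_of_isCompact {X E : Type*} [TopologicalSpace X] [T2Space X]
    [MeasurableSpace X] [OpensMeasurableSpace X] [NormedAddCommGroup E]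
    [SecondCountableTopologyEither X E] {μ : Measure X}
    [IsFiniteMeasureOnCompacts μ] {s : Set X} {f : X → E} (hs : IsCompact s) (hf : ContinuousOn f s)
    (p : ENNReal) : MemLp f p (μ.restrict s) := by
  have : IsFiniteMeasure (μ.restrict s) := isFiniteMeasure_restrict.mpr hs.measure_lt_top.ne
  obtain ⟨C, hC⟩ := hs.exists_bound_of_continuousOn hf
  exact .of_bound (hf.aestronglyMeasurable hs.measurableSet) C
    (ae_restrict_of_forall_mem hs.measurableSet hC)

instance : IsProbabilityMeasure (volume.restrict (Icc (0 : ℝ) 1)) := ⟨by simp⟩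

theorem integrated_gradients_lfa_general
    (d : ℕ)
    (f : EuclideanSpace ℝ (Fin d) → ℝ) (hf : ContDiff ℝ 1 f)
    (x₀ : EuclideanSpace ℝ (Fin d)) :
    let A : EuclideanSpace ℝ (Fin d) :=
      WithLp.toLp 2 (fun i => x₀ i * ∫ α in (0:ℝ)..1, gradient f (α • x₀) i)
    let L : EuclideanSpace ℝ (Fin d) → ℝ := fun w =>
      ∫ α in (0:ℝ)..1,
        ‖(show EuclideanSpace ℝ (Fin d) from WithLp.toLp 2 (fun i => x₀ i * gradient f (α • x₀) i)) - w‖ ^ 2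
    (∀ w, L A ≤ L w) ∧ (∀ w, L w = L A → w = A) := by
  intro A L
  set G : ℝ → EuclideanSpace ℝ (Fin d) :=
    fun α => WithLp.toLp 2 (fun i => x₀ i * gradient f (α • x₀) i)
  have hG : Continuous G := by
    have := hf.continuous_gradient
    fun_prop
  have hGL : MemLp G 2 (volume.restrict (Icc 0 1)) :=
    hG.continuousOn.memLp_restrict_of_isCompact isCompact_Icc 2
  have hinterval (g : ℝ → ℝ) : ∫ α in (0:ℝ)..1, g α = ∫ α in Icc 0 1, g α := by
    rw [intervalIntegral.integral_of_le zero_le_one, integral_Icc_eq_integral_Ioc]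
  have hL (w) : L w = ∫ α in Icc 0 1, ‖G α - w‖ ^ 2 := hinterval _
  have hA : A = ∫ α in Icc 0 1, G α := by
    ext i
    rw [EuclideanSpace.integral_apply (hGL.integrable one_le_two), integral_const_mul, ← hinterval]
  simp only [hL, hA]
  exact ⟨integral_norm_sub_integral_sq_le hGL, fun w => eq_integral_of_integral_norm_sub_sq_eq hGL⟩

/-- LFA with multiplicative continuous perturbations `ξ·x₀`, `ξ ∼ Uniform(0,1)`, and
gradient-matching loss is equivalent to Integrated Gradients: the IG attribution
`A_i = x₀_i · ∫₀¹ (∇f(α·x₀))_i dα` is the unique minimizer of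
`L(w) = ∫₀¹ ‖(x₀ ⊙ ∇f(α·x₀)) − w‖² dα`. -/
theorem integrated_gradients_lfa
    (d : ℕ) (hd : 1 ≤ d)
    (f : EuclideanSpace ℝ (Fin d) → ℝ) (hf : ContDiff ℝ 1 f)
    (x₀ : EuclideanSpace ℝ (Fin d)) :
    let A : EuclideanSpace ℝ (Fin d) :=
      WithLp.toLp 2 (fun i => x₀ i * ∫ α in (0:ℝ)..1, gradient f (α • x₀) i)
    let L : EuclideanSpace ℝ (Fin d) → ℝ := fun w =>
      ∫ α in (0:ℝ)..1,
        ‖(show EuclideanSpace ℝ (Fin d) from WithLp.toLp 2 (fun i => x₀ i * gradient f (α • x₀) i)) - w‖ ^ 2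
    (∀ w, L A ≤ L w) ∧ (∀ w, L w = L A → w = A) :=
  integrated_gradients_lfa_general d f hf x₀
end

section
/- Let d ≥ 1, let w ∈ ℝ^d, let f : ℝ^d → ℝ be the linear model f(x) = ⟨w, x⟩, and let x₀ ∈ ℝ^d. Then the unique minimizer over w′ ∈ ℝ^d of the multiplicative-noise gradient-matching objective L(w′) = ∫_0^1 ‖ (x₀ ⊙ ∇f(α·x₀)) − w′ ‖² dα is the vector with components w′_i = w_i · x₀_i, i.e. w ⊙ x₀ rather than w. (Multiplicative continuous noise methods such as Integrated Gradients and Gradient × Input do not recover the weights of an underlying linear model; they recover the weights multiplied componentwise by the input.) -/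
theorem hasGradientAt_inner_left {E : Type*} [NormedAddCommGroup E] [InnerProductSpace ℝ E]
    [CompleteSpace E] (w x : E) : HasGradientAt (fun y => inner ℝ w y) w x := by
  rw [hasGradientAt_iff_hasFDerivAt]
  exact (InnerProductSpace.toDual ℝ E w).hasFDerivAt

theorem gradient_inner_left {E : Type*} [NormedAddCommGroup E] [InnerProductSpace ℝ E]
    [CompleteSpace E] (w x : E) : gradient (fun y => inner ℝ w y) x = w :=
  (hasGradientAt_inner_left w x).gradient

theorem unique_min_of_eq_norm_sub_sq {E : Type*} [NormedAddCommGroup E] {L : E → ℝ} {a : E}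
    (hL : ∀ b, L b = ‖a - b‖ ^ 2) : (∀ b, L a ≤ L b) ∧ ∀ b, L b = L a → b = a := by
  refine ⟨fun b => by rw [hL, hL, sub_self, norm_zero, zero_pow two_ne_zero]; positivity, fun b hb => ?_⟩
  rw [hL, hL, sub_self, norm_zero, zero_pow two_ne_zero, sq_eq_zero_iff, norm_eq_zero, sub_eq_zero] at hb
  exact hb.symm

theorem multiplicative_noise_recovers_weight_times_input_general
    (d : ℕ)
    (w : EuclideanSpace ℝ (Fin d))
    (f : EuclideanSpace ℝ (Fin d) → ℝ)
    (hf : f = fun x => inner ℝ w x)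
    (x₀ : EuclideanSpace ℝ (Fin d)) :
    let wx : EuclideanSpace ℝ (Fin d) := WithLp.toLp 2 (fun i => w i * x₀ i)
    let L : EuclideanSpace ℝ (Fin d) → ℝ := fun w' =>
      ∫ α in (0:ℝ)..1,
        ‖(show EuclideanSpace ℝ (Fin d) from WithLp.toLp 2 (fun i => x₀ i * gradient f (α • x₀) i)) - w'‖ ^ 2
    (∀ w', L wx ≤ L w') ∧ (∀ w', L w' = L wx → w' = wx) := by
  intro wx L
  -- The gradient of a linear model is constant, so the integrand does not depend on `α`.
  have hgrad : ∀ y, gradient f y = w := hf ▸ gradient_inner_left w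
  refine unique_min_of_eq_norm_sub_sq fun w' => ?_
  simp only [L, hgrad, mul_comm (x₀ _), intervalIntegral.integral_const, sub_zero, one_smul]
  rfl

/-- Multiplicative continuous noise methods (Integrated Gradients, Gradient × Input)
do not recover the weights of an underlying linear model `f(x) = ⟨w, x⟩`: the unique
minimizer of `L(w′) = ∫₀¹ ‖(x₀ ⊙ ∇f(α·x₀)) − w′‖² dα` is `w ⊙ x₀`, not `w`. -/
theorem multiplicative_noise_recovers_weight_times_input
    (d : ℕ) (hd : 1 ≤ d)
    (w : EuclideanSpace ℝ (Fin d))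
    (f : EuclideanSpace ℝ (Fin d) → ℝ)
    (hf : f = fun x => inner ℝ w x)
    (x₀ : EuclideanSpace ℝ (Fin d)) :
    let wx : EuclideanSpace ℝ (Fin d) := WithLp.toLp 2 (fun i => w i * x₀ i)
    let L : EuclideanSpace ℝ (Fin d) → ℝ := fun w' =>
      ∫ α in (0:ℝ)..1,
        ‖(show EuclideanSpace ℝ (Fin d) from WithLp.toLp 2 (fun i => x₀ i * gradient f (α • x₀) i)) - w'‖ ^ 2
    (∀ w', L wx ≤ L w') ∧ (∀ w', L w' = L wx → w' = wx) :=
  multiplicative_noise_recovers_weight_times_input_general d w f hf x₀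
end
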